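/- The sesquilinear form ⟨·,·⟩_K : V × V → K_{1/2}, defined by ⟨p,q⟩_K := Σ_{m∈ℤ/2} ε^m Σ_{j+k+ℓ=m} ∫_{ℝ^d} p̄_j(y) q_k(y) ω_ℓ(y) e^{−Σ_ν λ_ν y_ν²} dy, is non-degenerate: if ⟨p,q⟩_K = 0 for all p ∈ V, then q = 0. -/

import Mathlib

/-! Let `n₀` be the lowest index with `q n₀ ≠ 0` and test against `p = q n₀ ε⁰`. Since `ω₀ = 1`
and every lower coefficient of `q` vanishes, the coefficient of `ε^{n₀/2}` in `⟨p, q⟩_K` is the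
Gaussian integral `∫ |q n₀|² e^{-∑ λ_ν y_ν²}`. A polynomial of vanishing Gaussian `L²`-norm vanishes
on `ℝ^d`, hence is zero. -/

open MeasureTheory
open scoped Topology BigOperators
noncomputable section

/-- evaluation of a complex polynomial at a real point -/
def evalP {d : ℕ} (p : MvPolynomial (Fin d) ℂ) (y : EuclideanSpace ℝ (Fin d)) : ℂ :=
  MvPolynomial.eval (fun i => (y i : ℂ)) p

/-- evaluation of a real polynomial at a real point -/
def evalR {d : ℕ} (p : MvPolynomial (Fin d) ℝ) (y : EuclideanSpace ℝ (Fin d)) : ℝ :=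
  MvPolynomial.eval (fun i => y i) p

/-- An element of the space `V` of formal series `∑_{j ∈ ℤ/2} p_j ε^j` (`p_j ∈ ℂ[y]`) is
represented by its coefficient function `ℤ → ℂ[y]` (the index `n` standing for the
exponent `n/2`); membership in `V` requires finitely many negative powers. -/
def LowerFinite {α : Type*} [Zero α] (p : ℤ → α) : Prop :=
  ∃ N : ℤ, ∀ n < N, p n = 0

/-- the coefficient of `ε^{m/2}` in the `K_{1/2}`-valued sesquilinear form
`⟨p,q⟩_K = ∑_m ε^m ∑_{j+k+ℓ=m} ∫ p̄_j q_k ω_ℓ e^{-∑ λ_ν y_ν²} dy`. -/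
def formCoeff {d : ℕ} (lam : Fin d → ℝ) (ω : ℕ → MvPolynomial (Fin d) ℝ)
    (p q : ℤ → MvPolynomial (Fin d) ℂ) (m : ℤ) : ℂ :=
  ∑ᶠ j : ℤ, ∑ᶠ k : ℤ,
    if 0 ≤ m - j - k then
      ∫ y : EuclideanSpace ℝ (Fin d),
        (starRingEnd ℂ) (evalP (p j) y) * evalP (q k) y *
          ((evalR (ω (m - j - k).toNat) y : ℝ) : ℂ) *
          ((Real.exp (-∑ ν, lam ν * (y ν)^2) : ℝ) : ℂ)
    else 0

namespace MvPolynomial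

theorem eq_zero_of_eval_ofReal_eq_zero {σ : Type*} {P : MvPolynomial σ ℂ}
    (h : ∀ x : σ → ℝ, eval (fun i => (x i : ℂ)) P = 0) : P = 0 :=
  funext_set (fun _ => Set.range ((↑) : ℝ → ℂ))
    (fun _ => Set.infinite_range_of_injective Complex.ofReal_injective) fun z hz => by
    choose x hx using fun i => hz i (Set.mem_univ i)
    rw [map_zero, ← _root_.funext hx]
    exact h x

theorem conj_eval_ofReal {σ : Type*} (P : MvPolynomial σ ℂ) (x : σ → ℝ) :
    starRingEnd ℂ (eval (fun i => (x i : ℂ)) P) =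
      eval (fun i => (x i : ℂ)) (map (starRingEnd ℂ) P) := by
  rw [eval_map, eval, coe_eval₂Hom, hom_eval₂]
  simp [Complex.conj_ofReal]

end MvPolynomial

theorem integrable_pow_mul_exp_neg_mul_sq (n : ℕ) {b : ℝ} (hb : 0 < b) :
    Integrable fun x : ℝ => x ^ n * Real.exp (-b * x ^ 2) := by
  simpa [Real.rpow_natCast] using
    integrable_rpow_mul_exp_neg_mul_sq hb (s := n) (neg_one_lt_zero.trans_le n.cast_nonneg)

theorem integrable_prod_pow_mul_exp_neg_sum_mul_sq {ι : Type*} [Fintype ι] {lam : ι → ℝ}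
    (hlam : ∀ i, 0 < lam i) (m : ι → ℕ) :
    Integrable fun x : ι → ℝ => (∏ i, x i ^ m i) * Real.exp (-∑ i, lam i * x i ^ 2) := by
  refine (Integrable.fintype_prod (f := fun i t => t ^ m i * Real.exp (-lam i * t ^ 2))
    fun i => integrable_pow_mul_exp_neg_mul_sq (m i) (hlam i)).congr
    (Filter.Eventually.of_forall fun x => ?_)
  simp only [Finset.prod_mul_distrib, ← Real.exp_sum, neg_mul, Finset.sum_neg_distrib]

theorem integrable_eval_mul_exp_neg_sum_mul_sq {ι : Type*} [Fintype ι] {lam : ι → ℝ}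
    (hlam : ∀ i, 0 < lam i) (P : MvPolynomial ι ℂ) :
    Integrable fun x : ι → ℝ =>
      MvPolynomial.eval (fun i => (x i : ℂ)) P * (Real.exp (-∑ i, lam i * x i ^ 2) : ℂ) := by
  refine (integrable_finsetSum P.support fun m _ =>
    ((integrable_prod_pow_mul_exp_neg_sum_mul_sq hlam m).ofReal.const_mul (P.coeff m))).congr
    (Filter.Eventually.of_forall fun x => ?_)
  simp only [MvPolynomial.eval_eq', Finset.sum_mul]
  refine Finset.sum_congr rfl fun m _ => ?_
  simp only [RCLike.ofReal_mul, RCLike.ofReal_prod, RCLike.ofReal_pow, mul_assoc]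
  rfl

theorem integrable_evalP_mul_exp_neg_sum_mul_sq {d : ℕ} {lam : Fin d → ℝ}
    (hlam : ∀ ν, 0 < lam ν) (P : MvPolynomial (Fin d) ℂ) :
    Integrable fun y : EuclideanSpace ℝ (Fin d) =>
      evalP P y * (Real.exp (-∑ ν, lam ν * y ν ^ 2) : ℂ) :=
  ((EuclideanSpace.volume_preserving_symm_measurableEquiv_toLp (Fin d)).integrable_comp_emb
    (MeasurableEquiv.toLp 2 (Fin d → ℝ)).symm.measurableEmbedding).2
    (integrable_eval_mul_exp_neg_sum_mul_sq hlam P)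

theorem continuous_evalP {d : ℕ} (P : MvPolynomial (Fin d) ℂ) :
    Continuous (evalP P) :=
  (MvPolynomial.continuous_eval P).comp <|
    continuous_pi fun i => Complex.continuous_ofReal.comp (EuclideanSpace.proj i).continuous

theorem eq_zero_of_integral_conj_mul_self_mul_exp_eq_zero {d : ℕ} {lam : Fin d → ℝ}
    (hlam : ∀ ν, 0 < lam ν) {Q : MvPolynomial (Fin d) ℂ}
    (h : ∫ y : EuclideanSpace ℝ (Fin d),
      starRingEnd ℂ (evalP Q y) * evalP Q y * (Real.exp (-∑ ν, lam ν * y ν ^ 2) : ℂ) = 0) :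
    Q = 0 := by
  set g : EuclideanSpace ℝ (Fin d) → ℝ :=
    fun y => Complex.normSq (evalP Q y) * Real.exp (-∑ ν, lam ν * y ν ^ 2)
  -- on real points `|Q|²` is the polynomial `map conj Q * Q`, which gives integrability
  have hg_eq : ∀ y, (g y : ℂ) =
      evalP (MvPolynomial.map (starRingEnd ℂ) Q * Q) y *
        (Real.exp (-∑ ν, lam ν * y ν ^ 2) : ℂ) := fun y => by
    rw [evalP, map_mul, ← MvPolynomial.conj_eval_ofReal, mul_comm (starRingEnd ℂ _),
      Complex.mul_conj, Complex.ofReal_mul]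
    rfl
  have hg_int : Integrable g := by
    refine (integrable_evalP_mul_exp_neg_sum_mul_sq hlam
      (MvPolynomial.map (starRingEnd ℂ) Q * Q)).re.congr (.of_forall fun y => ?_)
    show RCLike.re (_ : ℂ) = _
    rw [← hg_eq]
    exact Complex.ofReal_re _
  have hg_integral : ∫ y, g y = 0 := by
    refine Complex.ofReal_injective (integral_ofReal.symm.trans ?_)
    rw [Complex.ofReal_zero, ← h]
    congr 1 with y
    rw [mul_comm (starRingEnd ℂ _), Complex.mul_conj]
    exact Complex.ofReal_mul _ _
  have hg_cont : Continuous g :=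
    (Complex.continuous_normSq.comp (continuous_evalP Q)).mul <| Real.continuous_exp.comp <|
      continuous_neg.comp <| continuous_finsetSum _ fun ν _ =>
        continuous_const.mul ((EuclideanSpace.proj ν).continuous.pow 2)
  have hg_nonneg : 0 ≤ g := fun y => mul_nonneg (Complex.normSq_nonneg _) (Real.exp_pos _).le
  have hg_zero : g = 0 := (hg_cont.ae_eq_iff_eq volume continuous_const).mp <|
    (integral_eq_zero_iff_of_nonneg hg_nonneg hg_int).mp hg_integral
  refine MvPolynomial.eq_zero_of_eval_ofReal_eq_zero fun x => ?_
  have := congrFun hg_zero (WithLp.toLp 2 x)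
  simpa [g, evalP, Real.exp_ne_zero] using this

theorem formCoeff_single_left {d : ℕ} (lam : Fin d → ℝ) (ω : ℕ → MvPolynomial (Fin d) ℝ)
    (P : MvPolynomial (Fin d) ℂ) {q : ℤ → MvPolynomial (Fin d) ℂ} {j m : ℤ}
    (hq : ∀ k < m - j, q k = 0) :
    formCoeff lam ω (Pi.single j P) q m =
      ∫ y : EuclideanSpace ℝ (Fin d),
        starRingEnd ℂ (evalP P y) * evalP (q (m - j)) y * ((evalR (ω 0) y : ℝ) : ℂ) *
          ((Real.exp (-∑ ν, lam ν * (y ν)^2) : ℝ) : ℂ) := by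
  rw [formCoeff, finsum_eq_single _ j fun i hi => ?_, finsum_eq_single _ (m - j) fun k hk => ?_]
  · simp
  · rcases hk.lt_or_gt with hk | hk
    · simp [hq k hk, evalP]
    · rw [if_neg (by omega)]
  · simp [hi, evalP]

theorem LowerFinite.exists_least_ne_zero {α : Type*} [Zero α] {q : ℤ → α} (hq : LowerFinite q)
    (hne : ∃ n, q n ≠ 0) : ∃ n, q n ≠ 0 ∧ ∀ k < n, q k = 0 := by
  obtain ⟨N, hN⟩ := hq
  obtain ⟨n, hn, hmin⟩ := Int.exists_least_of_bdd
    ⟨N, fun k hk => not_lt.mp fun hkN => hk (hN k hkN)⟩ hne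
  exact ⟨n, hn, fun k hk => not_not.mp fun hqk => (hmin k hqk).not_gt hk⟩

theorem lowerFinite_single {α : Type*} [Zero α] (j : ℤ) (a : α) :
    LowerFinite (Pi.single j a : ℤ → α) :=
  ⟨j, fun _ hk => Pi.single_eq_of_ne hk.ne _⟩

theorem lemma_3_5_nondegenerate_general (d : ℕ)
    (lam : Fin d → ℝ) (hlam : ∀ ν, 0 < lam ν)
    (ω : ℕ → MvPolynomial (Fin d) ℝ)
    (hω0 : ω 0 = 1)
    (q : ℤ → MvPolynomial (Fin d) ℂ) (hq : LowerFinite q)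
    (h : ∀ p : ℤ → MvPolynomial (Fin d) ℂ, LowerFinite p →
      ∀ m : ℤ, formCoeff lam ω p q m = 0) :
    ∀ n, q n = 0 := by
  by_contra! hne
  obtain ⟨n, hn, hbelow⟩ := hq.exists_least_ne_zero hne
  have hform := h (Pi.single 0 (q n)) (lowerFinite_single 0 (q n)) n
  rw [formCoeff_single_left lam ω (q n) (by simpa using hbelow), hω0] at hform
  exact hn (eq_zero_of_integral_conj_mul_self_mul_exp_eq_zero hlam (by simpa [evalR] using hform))

/-- **Lemma 3.5** (Klein–Rosenberger): the sesquilinear form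
`⟨·,·⟩_K : V × V → K_{1/2}` is non-degenerate: if `⟨p, q⟩_K = 0` for all `p ∈ V`,
then `q = 0`.  Here `ω₀ = 1` and
`ω_j = ∑_{ℓ=1}^{2j} ∑_{k₁+⋯+k_ℓ = j, k_i ∈ ℕ*/2} ((-2)^ℓ/ℓ!) φ_{2k₁} ⋯ φ_{2k_ℓ}`
(encoded with `n = 2j`, so `ω_j = ω n` and `φ_{2k_i} = φpoly n_i` with `n_i = 2k_i ≥ 1`,
`n₁ + ⋯ + n_ℓ = n`), where the `φ_k` are the homogeneous Taylor polynomials of degree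
`k+2` of the eikonal phase `φ`. -/
theorem lemma_3_5_nondegenerate (d : ℕ) (hd : 0 < d)
    (lam : Fin d → ℝ) (hlam : ∀ ν, 0 < lam ν)
    (φpoly : ℕ → MvPolynomial (Fin d) ℝ)
    (hφpoly : ∀ n, 1 ≤ n → (φpoly n).IsHomogeneous (n + 2))
    (ω : ℕ → MvPolynomial (Fin d) ℝ)
    (hω0 : ω 0 = 1)
    (hω : ∀ n, 1 ≤ n → ω n =
      ∑ ℓ ∈ Finset.Icc 1 n, ((-2 : ℝ)^ℓ / (Nat.factorial ℓ)) •
        ∑ t ∈ (Finset.Nat.antidiagonalTuple ℓ n).filter (fun t => ∀ i, 1 ≤ t i),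
          ∏ i, φpoly (t i))
    (q : ℤ → MvPolynomial (Fin d) ℂ) (hq : LowerFinite q)
    (h : ∀ p : ℤ → MvPolynomial (Fin d) ℂ, LowerFinite p →
      ∀ m : ℤ, formCoeff lam ω p q m = 0) :
    ∀ n, q n = 0 :=
  lemma_3_5_nondegenerate_general d lam hlam ω hω0 q hq h
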